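/- arXiv:1504.02922 — 2 statements merged into one kernel-verified Lean document; each statement's English description precedes it below -/
import Mathlib

section
/- The generating functions G_{m,N}(a,b,q) for Capparelli-type partitions satisfy the recurrence G_{m,3N} = G_{m,3(N-1)+2} + q^{3N} G_{m,3(N-1)} for all positive integers N and m ∈ {1,2}. -/
namespace CapparelliG

/-- `G m Nb` is the Alladi–Andrews–Gordon three-variable generating function
`G_{m,Nb}(a,b,q)` (with `a = X 0`, `b = X 1`, `q = X 2`): the coefficient of
`aⁱ bʲ qⁿ` is the number of partitions of `n` (recorded as weakly decreasing lists of
positive integers, here necessarily strictly decreasing) with no part equal to `m`,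
largest part `≤ Nb`, consecutive-part differences `≥ 4` unless the parts are consecutive
multiples of 3 (difference 3) or sum to a multiple of 6 (difference at least 2), with
exactly `i` parts `≡ 2 (mod 3)` and exactly `j` parts `≡ 1 (mod 3)`. -/
noncomputable def G (m : ℕ) (Nb : ℕ) : MvPowerSeries (Fin 3) ℤ :=
  fun d =>
    (Nat.card {l : List ℕ // (∀ x ∈ l, 0 < x ∧ x ≠ m ∧ x ≤ Nb) ∧
        l.Chain' (fun x y => y + 2 ≤ x ∧
          (y + 4 ≤ x ∨ (3 ∣ y ∧ x = y + 3) ∨ 6 ∣ (x + y))) ∧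
        (l.filter (fun x => x % 3 = 2)).length = d 0 ∧
        (l.filter (fun x => x % 3 = 1)).length = d 1 ∧
        l.sum = d 2} : ℤ)

/-!
Split the partitions with parts `≤ 3N` according to whether `3N` is a part. Those without it
have parts `≤ 3N - 1 = 3(N-1) + 2`. In those with it, `3N` is the largest part, and the
difference conditions against `3N` admit exactly the next parts `≤ 3N - 3` (the part `3N - 2`
fails: the difference is 2 but the sum is `≡ 4 (mod 6)`). So removing `3N` is a bijection onto
the partitions with parts `≤ 3(N-1)`, which only shifts the exponent of `q`, as `3N ≡ 0 (mod 3)`.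
-/

open MvPowerSeries

lemma _root_.List.forall_mem_le_iff_head?_of_pairwise {α : Type*} [Preorder α] {l : List α}
    {b : α} (hl : l.Pairwise (· ≥ ·)) : (∀ x ∈ l, x ≤ b) ↔ ∀ x ∈ l.head?, x ≤ b := by
  cases l with
  | nil => simp
  | cons a t =>
    simp only [List.forall_mem_cons, List.head?_cons, Option.mem_def, Option.some.injEq,
      forall_eq']
    exact ⟨And.left, fun ha => ⟨ha, fun x hx => ((List.pairwise_cons.1 hl).1 x hx).trans ha⟩⟩

def Gap (x y : ℕ) : Prop :=
  y + 2 ≤ x ∧ (y + 4 ≤ x ∨ (3 ∣ y ∧ x = y + 3) ∨ 6 ∣ (x + y))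

lemma Gap.lt {x y : ℕ} (h : Gap x y) : y < x := by
  unfold Gap at h; omega

lemma gap_three_mul_add_three_iff {K y : ℕ} : Gap (3 * K + 3) y ↔ y ≤ 3 * K := by
  unfold Gap; omega

lemma pairwise_gt_of_isChain_gap {l : List ℕ} (hl : l.IsChain Gap) : l.Pairwise (· > ·) :=
  List.isChain_iff_pairwise.1 (hl.imp fun _ _ => Gap.lt)

def partitions (m Nb : ℕ) : Set (List ℕ) :=
  {l | (∀ x ∈ l, 0 < x ∧ x ≠ m) ∧ (∀ x ∈ l, x ≤ Nb) ∧ l.IsChain Gap}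

lemma mem_partitions_iff_head? {m Nb : ℕ} {l : List ℕ} :
    l ∈ partitions m Nb ↔
      (∀ x ∈ l, 0 < x ∧ x ≠ m) ∧ (∀ x ∈ l.head?, x ≤ Nb) ∧ l.IsChain Gap := by
  refine and_congr_right fun _ => ⟨fun ⟨hb, hc⟩ => ⟨?_, hc⟩, fun ⟨hb, hc⟩ => ⟨?_, hc⟩⟩ <;>
    simpa only [List.forall_mem_le_iff_head?_of_pairwise
      ((pairwise_gt_of_isChain_gap hc).imp le_of_lt)] using hb

lemma finite_partitions (m Nb : ℕ) : (partitions m Nb).Finite := by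
  classical
  refine Set.Finite.of_finite_image (f := List.toFinset) ?_ ?_
  · refine (Finset.range (Nb + 1)).powerset.finite_toSet.subset ?_
    rintro _ ⟨l, hl, rfl⟩
    rw [Finset.mem_coe, Finset.mem_powerset]
    intro x hx
    simpa [Nat.lt_succ_iff] using hl.2.1 x (List.mem_toFinset.1 hx)
  · intro l₁ h₁ l₂ h₂ h
    exact (pairwise_gt_of_isChain_gap h₁.2.2).eq_of_mem_iff (pairwise_gt_of_isChain_gap h₂.2.2)
      fun x => by rw [← List.mem_toFinset, h, List.mem_toFinset]

lemma disjoint_partitions_image_cons (m B : ℕ) (T : Set (List ℕ)) :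
    Disjoint (partitions m B) (List.cons (B + 1) '' T) := by
  refine Set.disjoint_left.2 ?_
  rintro _ hl ⟨t, -, rfl⟩
  exact absurd (hl.2.1 (B + 1) List.mem_cons_self) (Nat.not_succ_le_self B)

lemma partitions_three_mul_add_three {m K : ℕ} (hm : m ≠ 3 * K + 3) :
    partitions m (3 * K + 3) =
      partitions m (3 * K + 2) ∪ List.cons (3 * K + 3) '' partitions m (3 * K) := by
  ext l
  rcases l with _ | ⟨a, t⟩
  · simp [partitions]
  · simp only [Set.mem_union, Set.mem_image, List.cons.injEq, mem_partitions_iff_head?,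
      List.forall_mem_cons, List.isChain_cons, List.head?_cons, Option.mem_def,
      Option.some.injEq, forall_eq']
    by_cases ha : a = 3 * K + 3
    · subst ha
      simp [gap_three_mul_add_three_iff, hm.symm]
    · have hbound : a ≤ 3 * K + 3 ↔ a ≤ 3 * K + 2 := by omega
      simp [hbound, Ne.symm ha]

noncomputable def weight (l : List ℕ) : Fin 3 →₀ ℕ :=
  Finsupp.single 0 (l.filter (fun x => x % 3 = 2)).length +
    Finsupp.single 1 (l.filter (fun x => x % 3 = 1)).length + Finsupp.single 2 l.sum

lemma weight_eq_iff {l : List ℕ} {d : Fin 3 →₀ ℕ} :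
    weight l = d ↔ (l.filter (fun x => x % 3 = 2)).length = d 0 ∧
      (l.filter (fun x => x % 3 = 1)).length = d 1 ∧ l.sum = d 2 := by
  constructor
  · rintro rfl
    simp [weight]
  · rintro ⟨h0, h1, h2⟩
    ext i
    fin_cases i <;> simp [weight, h0, h1, h2]

lemma weight_cons_of_mod_three_eq_zero {c : ℕ} (hc : c % 3 = 0) (l : List ℕ) :
    weight (c :: l) = Finsupp.single 2 c + weight l := by
  simp only [weight, hc, OfNat.zero_ne_ofNat, decide_false, Bool.false_eq_true,
    not_false_eq_true, zero_ne_one, List.filter_cons_of_neg, List.sum_cons, Finsupp.single_add]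
  abel

noncomputable def genFun (S : Set (List ℕ)) : MvPowerSeries (Fin 3) ℤ :=
  fun d => ({l ∈ S | weight l = d}.ncard : ℤ)

lemma G_eq_genFun (m Nb : ℕ) : G m Nb = genFun (partitions m Nb) := by
  ext d
  change (Nat.card _ : ℤ) = (Set.ncard _ : ℤ)
  rw [← Nat.card_coe_set_eq]
  congr 1
  refine Nat.card_congr (Equiv.subtypeEquivRight fun l => ?_)
  simp only [partitions, Set.mem_ofPred_eq, weight_eq_iff, forall_and, and_assoc]
  rfl

lemma genFun_union {S T : Set (List ℕ)} (hST : Disjoint S T) (hS : S.Finite) (hT : T.Finite) :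
    genFun (S ∪ T) = genFun S + genFun T := by
  ext d
  change (Set.ncard {l ∈ S ∪ T | weight l = d} : ℤ) = Set.ncard _ + Set.ncard _
  rw [show {l ∈ S ∪ T | weight l = d} = _ from Set.sep_union,
    Set.ncard_union_eq (hST.mono (Set.sep_subset _ _) (Set.sep_subset _ _))
      (hS.subset (Set.sep_subset _ _)) (hT.subset (Set.sep_subset _ _)), Nat.cast_add]

lemma genFun_image_cons {c : ℕ} (hc : c % 3 = 0) (S : Set (List ℕ)) :
    genFun (List.cons c '' S) = X 2 ^ c * genFun S := by
  ext d
  rw [X_pow_eq, coeff_monomial_mul]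
  change (Set.ncard {l ∈ List.cons c '' S | weight l = d} : ℤ) = if _ then 1 * _ else 0
  split_ifs with hcd
  · have hfiber : {l ∈ List.cons c '' S | weight l = d} =
        List.cons c '' {t ∈ S | weight t = d - Finsupp.single 2 c} := by
      ext l
      simp only [Set.mem_sep_iff, Set.mem_image]
      constructor
      · rintro ⟨⟨t, ht, rfl⟩, hw⟩
        rw [weight_cons_of_mod_three_eq_zero hc] at hw
        exact ⟨t, ⟨ht, by rw [← hw, add_tsub_cancel_left]⟩, rfl⟩
      · rintro ⟨t, ⟨ht, hw⟩, rfl⟩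
        refine ⟨⟨t, ht, rfl⟩, ?_⟩
        rw [weight_cons_of_mod_three_eq_zero hc, hw, add_tsub_cancel_of_le hcd]
    rw [hfiber, Set.ncard_image_of_injective _ List.cons_injective, one_mul]
    rfl
  · have hfiber : {l ∈ List.cons c '' S | weight l = d} = ∅ := by
      refine Set.eq_empty_iff_forall_notMem.2 ?_
      rintro _ ⟨⟨t, -, rfl⟩, hw⟩
      rw [weight_cons_of_mod_three_eq_zero hc] at hw
      exact hcd (hw ▸ le_self_add)
    rw [hfiber, Set.ncard_empty, Nat.cast_zero]

/-- Berkovich–Uncu, recurrence (AAGrec2): for `m ∈ {1,2}` and every positive integer `N`,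
`G_{m,3N} = G_{m,3(N-1)+2} + q^{3N} G_{m,3(N-1)}`. -/
theorem G_recurrence (m : ℕ) (hm : m = 1 ∨ m = 2) (N : ℕ) (hN : 1 ≤ N) :
    G m (3 * N) =
      G m (3 * (N - 1) + 2) + (MvPowerSeries.X 2 : MvPowerSeries (Fin 3) ℤ) ^ (3 * N) *
        G m (3 * (N - 1)) := by
  obtain ⟨K, rfl⟩ : ∃ K, N = K + 1 := ⟨N - 1, by omega⟩
  rw [show 3 * (K + 1) = 3 * K + 3 by ring, show K + 1 - 1 = K by omega, G_eq_genFun,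
    G_eq_genFun, G_eq_genFun, partitions_three_mul_add_three (by omega),
    genFun_union (disjoint_partitions_image_cons _ _ _) (finite_partitions _ _)
      ((finite_partitions _ _).image _), genFun_image_cons (by omega)]

end CapparelliG
end

section
/- For nonnegative integers N, i, j with N+1 ≥ i+j and m ∈ {1,2}, the expression q^{ω(m,i,j)} · ((1 - q^{3(N+1+i+(-1)^m j)})/(1 - q^{6(N+1)})) · [N+1 choose i, j]_{q^6} · (-q^3; q^3)_{N+1-i-j}, where ω(m,i,j) = (3i+(-1)^m m)i + (3j+(-1)^{m+1} m)j, is a polynomial in q with nonnegative integer coefficients. -/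
open Finset

/-- The finite q-Pochhammer symbol `(a; q)_L = ∏_{t=0}^{L-1} (1 - a qᵗ)` in `ℚ(q)`. -/
noncomputable def qPoch (a q : RatFunc ℚ) (L : ℕ) : RatFunc ℚ :=
  ∏ t ∈ Finset.range L, (1 - a * q ^ t)

/-- The Gaussian binomial coefficient `[N choose k]_Q` in `ℚ(q)`
(zero unless `N ≥ k ≥ 0`). -/
noncomputable def qBinom (Q : RatFunc ℚ) (N k : ℕ) : RatFunc ℚ :=
  if k ≤ N then ∏ t ∈ Finset.range k, (1 - Q ^ (N - t)) / (1 - Q ^ (t + 1)) else 0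

/-- The q-trinomial coefficient `[N choose i, j]_Q = [N choose i]_Q [N-i choose j]_Q`. -/
noncomputable def qTrinom (Q : RatFunc ℚ) (N i j : ℕ) : RatFunc ℚ :=
  qBinom Q N i * qBinom Q (N - i) j

/-- `ω(m,i,j) = (3i+(-1)^m m)i + (3j+(-1)^{m+1} m)j`. -/
def omegaBU (m i j : ℕ) : ℤ :=
  (3 * i + (-1) ^ m * m) * i + (3 * j + (-1) ^ (m + 1) * m) * j

/-! Put `r = q³` and `Q = q⁶ = r²`, and let `L = N + 1 - i - j`, so that the trinomial is the
`Q`-multinomial `[i+j+L]! / ([i]! [j]! [L]!)`. The exponent `3(N+1+i+(-1)^m j)` is `2s + L` in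
powers of `r`, with `s = i` for `m = 1` and `s = i + j` for `m = 2`, and
`1 - r^(2s+L) = (1 - Q^s) + Q^s (1 - r^L)`. The factor `1 - r^L` combines with the last factor
`1 + r^L` of `(-r; r)_L` into `1 - Q^L`, and each of `1 - Q^i`, `1 - Q^j`, `1 - Q^L` cancels
against the multinomial and the denominator `1 - Q^(N+1)`, leaving a multinomial with one index
lowered. Multinomials are products of Gaussian binomials, which have nonnegative coefficients by
the `q`-Pascal rule, and `ω(m,i,j) ≥ 0` for `m ∈ {1, 2}`. -/

open Polynomial

section QFactorial

variable {K : Type*}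

def qFact [CommRing K] (Q : K) (n : ℕ) : K :=
  ∏ t ∈ range n, (1 - Q ^ (t + 1))

@[simp]
lemma qFact_zero [CommRing K] (Q : K) : qFact Q 0 = 1 :=
  prod_range_zero _

lemma qFact_succ [CommRing K] (Q : K) (n : ℕ) :
    qFact Q (n + 1) = qFact Q n * (1 - Q ^ (n + 1)) :=
  prod_range_succ _ _

variable [Field K] {Q : K}

lemma qFact_ne_zero (hQ : ∀ n, 1 - Q ^ (n + 1) ≠ 0) (n : ℕ) : qFact Q n ≠ 0 :=
  prod_ne_zero_iff.mpr fun t _ ↦ hQ t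

def qMultinom (Q : K) (i j l : ℕ) : K :=
  qFact Q (i + j + l) / (qFact Q i * qFact Q j * qFact Q l)

variable {i j l : ℕ}

lemma one_sub_pow_div_mul_qMultinom_succ_left (hQ : ∀ n, 1 - Q ^ (n + 1) ≠ 0) :
    (1 - Q ^ (i + 1)) / (1 - Q ^ (i + 1 + j + l)) * qMultinom Q (i + 1) j l =
      qMultinom Q i j l := by
  simp only [qMultinom, show i + 1 + j + l = i + j + l + 1 by ring, qFact_succ]
  field_simp [qFact_ne_zero hQ, hQ]

lemma one_sub_pow_div_mul_qMultinom_succ_middle (hQ : ∀ n, 1 - Q ^ (n + 1) ≠ 0) :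
    (1 - Q ^ (j + 1)) / (1 - Q ^ (i + (j + 1) + l)) * qMultinom Q i (j + 1) l =
      qMultinom Q i j l := by
  simp only [qMultinom, show i + (j + 1) + l = i + j + l + 1 by ring, qFact_succ]
  field_simp [qFact_ne_zero hQ, hQ]

lemma one_sub_pow_div_mul_qMultinom_succ_right (hQ : ∀ n, 1 - Q ^ (n + 1) ≠ 0) :
    (1 - Q ^ (l + 1)) / (1 - Q ^ (i + j + (l + 1))) * qMultinom Q i j (l + 1) =
      qMultinom Q i j l := by
  simp only [qMultinom, show i + j + (l + 1) = i + j + l + 1 by ring, qFact_succ]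
  field_simp [qFact_ne_zero hQ, hQ]

end QFactorial

section GaussianBinomial

variable {Q : RatFunc ℚ} {n k : ℕ}

lemma qBinom_of_lt (h : n < k) : qBinom Q n k = 0 := by
  simp [qBinom, Nat.not_le.mpr h]

lemma qBinom_eq_qFact (hQ : ∀ n, 1 - Q ^ (n + 1) ≠ 0) (h : k ≤ n) :
    qBinom Q n k = qFact Q n / (qFact Q k * qFact Q (n - k)) := by
  induction k with
  | zero => simp [qBinom, qFact_ne_zero hQ]
  | succ k ih =>
    obtain ⟨d, rfl⟩ : ∃ d, n = k + 1 + d := ⟨n - (k + 1), by omega⟩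
    have step : qBinom Q (k + 1 + d) (k + 1) =
        qBinom Q (k + 1 + d) k * ((1 - Q ^ (d + 1)) / (1 - Q ^ (k + 1))) := by
      simp only [qBinom, if_pos h, if_pos (by omega : k ≤ k + 1 + d), prod_range_succ]
      rw [show k + 1 + d - k = d + 1 by omega]
    rw [step, ih (by omega), show k + 1 + d - k = d + 1 by omega,
      show k + 1 + d - (k + 1) = d by omega, qFact_succ Q d, qFact_succ Q k]
    field_simp [qFact_ne_zero hQ, hQ]

lemma qBinom_succ_succ (hQ : ∀ n, 1 - Q ^ (n + 1) ≠ 0) (h : k ≤ n) :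
    qBinom Q (n + 1) (k + 1) = qBinom Q n (k + 1) + Q ^ (n - k) * qBinom Q n k := by
  obtain rfl | hk := h.eq_or_lt
  · simp [qBinom_eq_qFact hQ, qBinom_of_lt, qFact_ne_zero hQ]
  obtain ⟨d, rfl⟩ : ∃ d, n = k + 1 + d := ⟨n - (k + 1), by omega⟩
  rw [qBinom_eq_qFact hQ (by omega), qBinom_eq_qFact hQ (by omega), qBinom_eq_qFact hQ h,
    show k + 1 + d + 1 - (k + 1) = d + 1 by omega, show k + 1 + d - (k + 1) = d by omega,
    show k + 1 + d - k = d + 1 by omega, qFact_succ Q (k + 1 + d), qFact_succ Q d,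
    qFact_succ Q k]
  field_simp [qFact_ne_zero hQ, hQ]
  ring

lemma qTrinom_eq_qMultinom (hQ : ∀ n, 1 - Q ^ (n + 1) ≠ 0) (i j l : ℕ) :
    qTrinom Q (i + j + l) i j = qMultinom Q i j l := by
  rw [qTrinom, qBinom_eq_qFact hQ (by omega), qBinom_eq_qFact hQ (by omega),
    show i + j + l - i = j + l by omega, show j + l - j = l by omega, qMultinom]
  field_simp [qFact_ne_zero hQ]

end GaussianBinomial

noncomputable def natPolynomials : Subsemiring (RatFunc ℚ) :=
  ((algebraMap ℚ[X] (RatFunc ℚ)).comp (mapRingHom (Nat.castRingHom ℚ))).rangeS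

lemma X_mem_natPolynomials : (RatFunc.X : RatFunc ℚ) ∈ natPolynomials :=
  ⟨X, by simp [RatFunc.algebraMap_X]⟩

lemma exists_natCoeff_of_mem_natPolynomials {f : RatFunc ℚ} (hf : f ∈ natPolynomials) :
    ∃ P : ℚ[X], f = algebraMap ℚ[X] (RatFunc ℚ) P ∧ ∀ k, ∃ c : ℕ, P.coeff k = c := by
  obtain ⟨P, rfl⟩ := hf
  exact ⟨P.map (Nat.castRingHom ℚ), rfl, fun k ↦ ⟨P.coeff k, by simp⟩⟩

lemma one_sub_X_pow_ne_zero {n : ℕ} (hn : 0 < n) : (1 : RatFunc ℚ) - RatFunc.X ^ n ≠ 0 := by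
  have h := (map_ne_zero_iff _ (RatFunc.algebraMap_injective ℚ)).mpr
    (X_pow_sub_C_ne_zero hn (1 : ℚ))
  rw [← neg_ne_zero, neg_sub]
  simpa [RatFunc.algebraMap_X] using h

section Positivity

variable {Q r : RatFunc ℚ}

lemma qBinom_mem_natPolynomials (hQS : Q ∈ natPolynomials) (hQ : ∀ n, 1 - Q ^ (n + 1) ≠ 0) :
    ∀ n k, qBinom Q n k ∈ natPolynomials
  | _, 0 => by simp [qBinom, one_mem]
  | 0, _ + 1 => by simp [qBinom_of_lt, zero_mem]
  | n + 1, k + 1 => by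
    obtain h | h := le_or_gt k n
    · rw [qBinom_succ_succ hQ h]
      exact add_mem (qBinom_mem_natPolynomials hQS hQ n (k + 1))
        (mul_mem (pow_mem hQS _) (qBinom_mem_natPolynomials hQS hQ n k))
    · simp [qBinom_of_lt (Nat.succ_lt_succ h), zero_mem]

lemma qMultinom_mem_natPolynomials (hQS : Q ∈ natPolynomials)
    (hQ : ∀ n, 1 - Q ^ (n + 1) ≠ 0) (i j l : ℕ) : qMultinom Q i j l ∈ natPolynomials := by
  rw [← qTrinom_eq_qMultinom hQ]
  exact mul_mem (qBinom_mem_natPolynomials hQS hQ _ _) (qBinom_mem_natPolynomials hQS hQ _ _)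

lemma qPoch_neg_mem_natPolynomials (hr : r ∈ natPolynomials) (L : ℕ) :
    qPoch (-r) r L ∈ natPolynomials :=
  prod_mem fun t _ ↦ by
    rw [show 1 - -r * r ^ t = 1 + r ^ (t + 1) by ring]
    exact add_mem (one_mem _) (pow_mem hr _)

variable {i j l : ℕ}

lemma one_sub_pow_left_div_mul_qMultinom_mem (hQS : Q ∈ natPolynomials)
    (hQ : ∀ n, 1 - Q ^ (n + 1) ≠ 0) :
    (1 - Q ^ i) / (1 - Q ^ (i + j + l)) * qMultinom Q i j l ∈ natPolynomials := by
  cases i with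
  | zero => simp [zero_mem]
  | succ i =>
    rw [one_sub_pow_div_mul_qMultinom_succ_left hQ]
    exact qMultinom_mem_natPolynomials hQS hQ _ _ _

lemma one_sub_pow_middle_div_mul_qMultinom_mem (hQS : Q ∈ natPolynomials)
    (hQ : ∀ n, 1 - Q ^ (n + 1) ≠ 0) :
    (1 - Q ^ j) / (1 - Q ^ (i + j + l)) * qMultinom Q i j l ∈ natPolynomials := by
  cases j with
  | zero => simp [zero_mem]
  | succ j =>
    rw [one_sub_pow_div_mul_qMultinom_succ_middle hQ]
    exact qMultinom_mem_natPolynomials hQS hQ _ _ _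

lemma one_sub_pow_right_div_mul_qMultinom_mul_qPoch_mem (hr : r ∈ natPolynomials)
    (hQ : ∀ n, 1 - (r ^ 2) ^ (n + 1) ≠ 0) :
    (1 - r ^ l) / (1 - (r ^ 2) ^ (i + j + l)) * qMultinom (r ^ 2) i j l * qPoch (-r) r l ∈
      natPolynomials := by
  cases l with
  | zero => simp [zero_mem]
  | succ l =>
    have hPoch : (1 - r ^ (l + 1)) * qPoch (-r) r (l + 1) =
        (1 - (r ^ 2) ^ (l + 1)) * qPoch (-r) r l := by
      rw [qPoch, prod_range_succ, ← qPoch]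
      ring
    have hcancel : (1 - r ^ (l + 1)) / (1 - (r ^ 2) ^ (i + j + (l + 1))) *
        qMultinom (r ^ 2) i j (l + 1) * qPoch (-r) r (l + 1) =
          qMultinom (r ^ 2) i j l * qPoch (-r) r l := by
      rw [← one_sub_pow_div_mul_qMultinom_succ_right (i := i) (j := j) (l := l) hQ]
      linear_combination qMultinom (r ^ 2) i j (l + 1) / (1 - (r ^ 2) ^ (i + j + (l + 1))) * hPoch
    rw [hcancel]
    exact mul_mem (qMultinom_mem_natPolynomials (pow_mem hr 2) hQ _ _ _)
      (qPoch_neg_mem_natPolynomials hr l)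

lemma one_sub_pow_two_mul_add_div_mul_qMultinom_mul_qPoch_mem (hr : r ∈ natPolynomials)
    (hr₁ : ∀ n, 1 - r ^ (n + 1) ≠ 0) {s : ℕ} (hs : s = i ∨ s = i + j) :
    (1 - r ^ (2 * s + l)) / (1 - (r ^ 2) ^ (i + j + l)) * qMultinom (r ^ 2) i j l *
      qPoch (-r) r l ∈ natPolynomials := by
  have hQS : r ^ 2 ∈ natPolynomials := pow_mem hr 2
  have hQ : ∀ n, 1 - (r ^ 2) ^ (n + 1) ≠ 0 := fun n ↦ by
    rw [← pow_mul]
    exact hr₁ (2 * n + 1)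
  set D := 1 - (r ^ 2) ^ (i + j + l)
  set M := qMultinom (r ^ 2) i j l
  have hsplit : (1 - r ^ (2 * s + l)) / D * M * qPoch (-r) r l =
      (1 - (r ^ 2) ^ s) / D * M * qPoch (-r) r l +
        (r ^ 2) ^ s * ((1 - r ^ l) / D * M * qPoch (-r) r l) := by
    ring
  rw [hsplit]
  refine add_mem (mul_mem ?_ (qPoch_neg_mem_natPolynomials hr l))
    (mul_mem (pow_mem hQS s) (one_sub_pow_right_div_mul_qMultinom_mul_qPoch_mem hr hQ))
  obtain rfl | rfl := hs
  · exact one_sub_pow_left_div_mul_qMultinom_mem hQS hQ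
  · rw [show (1 - (r ^ 2) ^ (i + j)) / D * M =
        (1 - (r ^ 2) ^ i) / D * M + (r ^ 2) ^ i * ((1 - (r ^ 2) ^ j) / D * M) by ring]
    exact add_mem (one_sub_pow_left_div_mul_qMultinom_mem hQS hQ)
      (mul_mem (pow_mem hQS i) (one_sub_pow_middle_div_mul_qMultinom_mem hQS hQ))

end Positivity

lemma omegaBU_nonneg {m : ℕ} (hm : m = 1 ∨ m = 2) (i j : ℕ) : 0 ≤ omegaBU m i j := by
  have hi := Nat.le_mul_self i
  have hj := Nat.le_mul_self j
  obtain rfl | rfl := hm <;> simp only [omegaBU] <;> push_cast <;> nlinarith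

/-- Berkovich–Uncu, Theorem 4 (def2): for `m ∈ {1,2}` and `N + 1 ≥ i + j`, the rational
function
`q^{ω(m,i,j)} ((1 - q^{3(N+1+i+(-1)^m j)})/(1 - q^{6(N+1)})) [N+1 choose i,j]_{q⁶}
  (-q³;q³)_{N+1-i-j}`
is a polynomial in `q` with nonnegative integer coefficients (it equals the partition
generating function `P_{m,2N+1}(i,j,q)`). -/
theorem def2_is_polynomial_nonneg (m : ℕ) (hm : m = 1 ∨ m = 2) (N i j : ℕ)
    (hij : i + j ≤ N + 1) :
    ∃ P : Polynomial ℚ,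
      (RatFunc.X : RatFunc ℚ) ^ (omegaBU m i j) *
          ((1 - RatFunc.X ^ ((3 * ((N : ℤ) + 1 + i + (-1) ^ m * j)))) /
            (1 - RatFunc.X ^ ((6 * ((N : ℤ) + 1))))) *
          qTrinom (RatFunc.X ^ 6) (N + 1) i j *
          qPoch (-(RatFunc.X ^ 3)) (RatFunc.X ^ 3) (N + 1 - i - j) =
        algebraMap (Polynomial ℚ) (RatFunc ℚ) P ∧
      ∀ k, ∃ c : ℕ, P.coeff k = (c : ℚ) := by
  obtain ⟨L, hL⟩ : ∃ L, N + 1 = i + j + L := ⟨N + 1 - i - j, by omega⟩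
  obtain ⟨s, hs, hexp⟩ : ∃ s, (s = i ∨ s = i + j) ∧
      3 * ((N : ℤ) + 1 + i + (-1) ^ m * j) = ((3 * (2 * s + L) : ℕ) : ℤ) := by
    obtain rfl | rfl := hm
    · exact ⟨i, .inl rfl, by push_cast; omega⟩
    · exact ⟨i + j, .inr rfl, by push_cast; omega⟩
  obtain ⟨w, hw⟩ := Int.eq_ofNat_of_zero_le (omegaBU_nonneg hm i j)
  have hr : (RatFunc.X : RatFunc ℚ) ^ 3 ∈ natPolynomials := pow_mem X_mem_natPolynomials 3
  have hr₁ : ∀ n, 1 - ((RatFunc.X : RatFunc ℚ) ^ 3) ^ (n + 1) ≠ 0 := fun n ↦ by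
    rw [← pow_mul]
    exact one_sub_X_pow_ne_zero (by omega)
  have hQ : ∀ n, 1 - (((RatFunc.X : RatFunc ℚ) ^ 3) ^ 2) ^ (n + 1) ≠ 0 := fun n ↦ by
    rw [← pow_mul]
    exact hr₁ _
  apply exists_natCoeff_of_mem_natPolynomials
  rw [hexp, show 6 * ((N : ℤ) + 1) = ((6 * (i + j + L) : ℕ) : ℤ) by push_cast; omega,
    hw, zpow_natCast, zpow_natCast, zpow_natCast, pow_mul, pow_mul,
    show (RatFunc.X : RatFunc ℚ) ^ 6 = (RatFunc.X ^ 3) ^ 2 by ring,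
    show N + 1 - i - j = L by omega, hL, qTrinom_eq_qMultinom hQ]
  simpa only [mul_assoc] using mul_mem (pow_mem X_mem_natPolynomials w)
    (one_sub_pow_two_mul_add_div_mul_qMultinom_mul_qPoch_mem (l := L) hr hr₁ hs)
end
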